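/- arXiv:1403.1951 — 2 statements merged into one kernel-verified Lean document; each statement's English description precedes it below -/
import Mathlib

section
/- Let h : {x₁,…,xₙ}* → {a₁,…,a_k}* be a solution of rank n−1 of two word equations E and E', and let α ∈ ℕ^k. Then the vectors 𝒮_E(L(θ_α∘h)) and 𝒮_{E'}(L(θ_α∘h)) in ℚ(x)ⁿ are linearly dependent over the field of fractions ℚ(x) of ℤ[x]. -/
open scoped BigOperators

namespace WordEquations

/-- The set of letters occurring in the images of a (letter-image) morphism. -/
def alph {Ξ Δ : Type*} (h : Ξ → List Δ) : Set Δ := ⋃ x, {a | a ∈ h x}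

/-- `h` is a solution of the system `T` of word equations. -/
def IsSolution {Ξ A : Type*} (h : Ξ → List A) (T : Set (List Ξ × List Ξ)) : Prop :=
  ∀ e ∈ T, e.1.flatMap h = e.2.flatMap h

/-- `h` is a solution of the single word equation `E`. -/
def IsSolutionE {Ξ A : Type*} (h : Ξ → List A) (E : List Ξ × List Ξ) : Prop :=
  E.1.flatMap h = E.2.flatMap h

/-- `θ` is a renaming of letters on the set `S`: it maps each letter of `S` to a
single letter, injectively on `S`. -/
def IsRenamingOn {A B : Type*} (θ : A → List B) (S : Set A) : Prop :=
  (∀ a ∈ S, ∃ b, θ a = [b]) ∧ ∀ a₁ ∈ S, ∀ a₂ ∈ S, θ a₁ = θ a₂ → a₁ = a₂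

/-- `g` is a principal solution of `T`: whenever `g = θ ∘ g'` for a solution `g'`
(and a morphism `θ` non-erasing on `alph g'`), `θ` is a renaming of letters. -/
def IsPrincipalSolution {Ξ Δ : Type*} (g : Ξ → List Δ) (T : Set (List Ξ × List Ξ)) : Prop :=
  IsSolution g T ∧
  ∀ (Δ' : Type) (g' : Ξ → List Δ') (θ : Δ' → List Δ),
    IsSolution g' T → (∀ a ∈ alph g', θ a ≠ []) →
    (∀ x, g x = (g' x).flatMap θ) → IsRenamingOn θ (alph g')

/-- The vector `γ(h)_a = (|h(x₁)|_a, …, |h(xₙ)|_a) ∈ ℚⁿ`. -/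
def gamVec {n : ℕ} {Δ : Type*} [DecidableEq Δ] (h : Fin n → List Δ) (a : Δ) :
    Fin n → ℚ := fun j => ((h j).count a : ℚ)

/-- `Γ_h`, the ℚ-span of the vectors `γ(h)_a`. -/
noncomputable def GammaSpace {n : ℕ} {Δ : Type*} [DecidableEq Δ] (h : Fin n → List Δ) :
    Submodule ℚ (Fin n → ℚ) := Submodule.span ℚ (Set.range (gamVec h))

/-- The rank of a morphism: `dim Γ_h`. -/
noncomputable def morphRank {n : ℕ} {Δ : Type*} [DecidableEq Δ] (h : Fin n → List Δ) : ℕ :=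
  Module.finrank ℚ ↥(GammaSpace h)

/-- `Mℕ`: all finite nonempty sums `Σᵢ aᵢ αᵢ` with `aᵢ` positive integers and `αᵢ ∈ M`
(equivalently, nonempty finite sums of elements of `M` with repetitions). -/
def natSums {n : ℕ} (M : Set (Fin n → ℚ)) : Set (Fin n → ℚ) :=
  {v | ∃ l : List (Fin n → ℚ), l ≠ [] ∧ (∀ x ∈ l, x ∈ M) ∧ l.sum = v}

/-- `M ⊆ ℚⁿ` has rank `r`: the ℚ-span of `M` has dimension `r`, and `M` is not contained
in any finite union of `(r-1)`-dimensional subspaces of its span. -/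
def HasRank {n : ℕ} (M : Set (Fin n → ℚ)) (r : ℕ) : Prop :=
  Module.finrank ℚ ↥(Submodule.span ℚ M) = r ∧
  ∀ V : Finset (Submodule ℚ (Fin n → ℚ)),
    (∀ W ∈ V, W ≤ Submodule.span ℚ M ∧ Module.finrank ℚ ↥W + 1 = r) →
    ¬ M ⊆ ⋃ W ∈ V, (W : Set (Fin n → ℚ))

/-- The monomial `X^α = ∏ᵢ Xᵢ^{αᵢ}` in `ℤ[X₁,…,Xₙ]`. -/
noncomputable def Xpow {n : ℕ} (α : Fin n → ℕ) : MvPolynomial (Fin n) ℤ :=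
  ∏ i, MvPolynomial.X i ^ α i

/-- The polynomial `Σ_{a : w_a = j} ∏_{t<a} X_{w_t}` associated with one side of an equation. -/
noncomputable def sideS {n : ℕ} (w : List (Fin n)) (j : Fin n) : MvPolynomial (Fin n) ℤ :=
  ∑ a : Fin w.length, if w.get a = j then ((w.take (a : ℕ)).map MvPolynomial.X).prod else 0

/-- The polynomial `S_{E,x_j}` of the equation `E = (u,v)`. -/
noncomputable def SE {n : ℕ} (E : List (Fin n) × List (Fin n)) (j : Fin n) :
    MvPolynomial (Fin n) ℤ :=
  sideS E.1 j - sideS E.2 j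

/-- Evaluation `p ↦ p(β)`, induced by `Xᵢ ↦ x^{βᵢ}`. -/
noncomputable def evalAt {n : ℕ} (β : Fin n → ℕ) (p : MvPolynomial (Fin n) ℤ) : Polynomial ℤ :=
  MvPolynomial.eval₂ (Int.castRingHom (Polynomial ℤ)) (fun i => Polynomial.X ^ β i) p

/-- `λ⁺`, the positive part of an integer vector. -/
def lamPos {n : ℕ} (lam : Fin n → ℤ) : Fin n → ℕ := fun i => (lam i).toNat

/-- `λ⁻`, the negative part of an integer vector. -/
def lamNeg {n : ℕ} (lam : Fin n → ℤ) : Fin n → ℕ := fun i => (-(lam i)).toNat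

/-- The length type `L(θ_α ∘ h)` of the composition of `h` with the power morphism
`θ_α : aᵢ ↦ aᵢ^{αᵢ}`. -/
def powLenType {n k : ℕ} (α : Fin k → ℕ) (h : Fin n → List (Fin k)) : Fin n → ℕ :=
  fun x => ∑ a, α a * (h x).count a

/-- The field `ℚ(x)`, realized as the field of fractions of `ℤ[x]`. -/
noncomputable abbrev RatX : Type := FractionRing (Polynomial ℤ)

/-- The vector `𝒮_E(β) ∈ ℚ(x)ⁿ`. -/
noncomputable def SEvec {n : ℕ} (E : List (Fin n) × List (Fin n)) (β : Fin n → ℕ) :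
    Fin n → RatX :=
  fun j => algebraMap (Polynomial ℤ) RatX (evalAt β (SE E j))

/-- The set of exponents of the minimal monomials of `p` (exponents in the support of `p`
that are minimal with respect to the componentwise order). -/
noncomputable def minimalSupport {n : ℕ} (p : MvPolynomial (Fin n) ℤ) : Finset (Fin n →₀ ℕ) :=
  p.support.filter (fun β => ∀ β' ∈ p.support, β' ≤ β → β' = β)

/-!
A word `w` is recorded by its position polynomials `P_{w,a} = Σ_{p : w_p = a} x^p ∈ ℤ[x]`.
For a solution `g` of `E = (u, v)` with length type `β`, the position polynomials of
`g(u) = g(v)` expand as `Σ_j S_{E,x_j}(β) P_{g(x_j),a} = 0` for every letter `a`, so `𝒮_E(β)`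
lies in the kernel of the matrix `(P_{g(x_j),a})_{a,j}` over `ℚ(x)`. At `x = 1` this matrix is
the matrix of letter counts, whose rows `γ(g)_a` span a space of dimension `rank g`, and rows
independent at `x = 1` stay independent over `ℚ(x)`: a dependence with polynomial coefficients
can be divided by `x - 1` as long as all its coefficients vanish at `1`. Hence the kernel has
dimension at most `n - rank g`. Replacing `h` by `g = θ_α ∘ h` does not change the rank, so for
`rank h = n - 1` the kernel is at most a line.
-/

open Polynomial

section PositionPoly

variable {A : Type*} [DecidableEq A]

/-- `positionPoly w a = Σ_{p : w_p = a} X^p`. -/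
noncomputable def positionPoly : List A → A → ℤ[X]
  | [], _ => 0
  | b :: w, a => (if b = a then 1 else 0) + X * positionPoly w a

@[simp] lemma positionPoly_nil (a : A) : positionPoly [] a = 0 := rfl

lemma positionPoly_cons (b : A) (w : List A) (a : A) :
    positionPoly (b :: w) a = (if b = a then 1 else 0) + X * positionPoly w a := rfl

lemma positionPoly_append (w₁ w₂ : List A) (a : A) :
    positionPoly (w₁ ++ w₂) a = positionPoly w₁ a + X ^ w₁.length * positionPoly w₂ a := by
  induction w₁ with
  | nil => simp
  | cons b w ih =>
    simp only [List.cons_append, positionPoly_cons, ih, List.length_cons]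
    ring

lemma positionPoly_eval_one (w : List A) (a : A) : (positionPoly w a).eval 1 = w.count a := by
  induction w with
  | nil => simp
  | cons b w ih =>
    rw [positionPoly_cons, List.count_cons, eval_add, eval_mul, eval_X, one_mul, ih]
    split_ifs <;> simp_all [add_comm]

end PositionPoly

lemma sideS_nil {n : ℕ} (j : Fin n) : sideS [] j = 0 := by
  simp [sideS]

lemma sideS_cons {n : ℕ} (j₀ : Fin n) (u : List (Fin n)) (j : Fin n) :
    sideS (j₀ :: u) j = (if j₀ = j then 1 else 0) + MvPolynomial.X j₀ * sideS u j := by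
  refine (Fin.sum_univ_succ (n := u.length) _).trans ?_
  rw [sideS, Finset.mul_sum]
  congr 1
  simp

lemma evalAt_sideS_cons {n : ℕ} (β : Fin n → ℕ) (j₀ : Fin n) (u : List (Fin n)) (j : Fin n) :
    evalAt β (sideS (j₀ :: u) j) = (if j₀ = j then 1 else 0) + X ^ β j₀ * evalAt β (sideS u j) := by
  rw [sideS_cons]
  split_ifs <;> simp [evalAt]

lemma evalAt_SE {n : ℕ} (β : Fin n → ℕ) (E : List (Fin n) × List (Fin n)) (j : Fin n) :
    evalAt β (SE E j) = evalAt β (sideS E.1 j) - evalAt β (sideS E.2 j) :=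
  map_sub (MvPolynomial.eval₂Hom _ _) _ _

section Solutions

variable {n : ℕ} {A : Type*} [DecidableEq A] (g : Fin n → List A)

def lengthType (j : Fin n) : ℕ := (g j).length

lemma positionPoly_flatMap (u : List (Fin n)) (a : A) :
    positionPoly (u.flatMap g) a =
      ∑ j, evalAt (lengthType g) (sideS u j) * positionPoly (g j) a := by
  induction u with
  | nil => simp [sideS_nil, evalAt]
  | cons j₀ u ih =>
    simp only [List.flatMap_cons, positionPoly_append, ih, evalAt_sideS_cons, add_mul, ite_mul,
      one_mul, zero_mul, Finset.sum_add_distrib, Finset.sum_ite_eq, Finset.mem_univ, if_true,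
      Finset.mul_sum, mul_assoc, lengthType]

lemma sum_evalAt_SE_mul_positionPoly {E : List (Fin n) × List (Fin n)} (hE : IsSolutionE g E)
    (a : A) : ∑ j, evalAt (lengthType g) (SE E j) * positionPoly (g j) a = 0 := by
  simp only [evalAt_SE, sub_mul, Finset.sum_sub_distrib, ← positionPoly_flatMap]
  exact sub_eq_zero.mpr (congrArg (positionPoly · a) hE)

end Solutions

section EvalTransfer

variable {R ι m : Type*} [CommRing R] [IsDomain R]

lemma linearIndependent_of_linearIndependent_eval (r : R) {v : ι → m → R[X]}
    (hv : LinearIndependent R fun i j => (v i j).eval r) : LinearIndependent R[X] v := by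
  rw [linearIndependent_iff'] at hv ⊢
  have pow_dvd : ∀ N (s : Finset ι) (c : ι → R[X]), ∑ i ∈ s, c i • v i = 0 →
      ∀ i ∈ s, (X - C r) ^ N ∣ c i := by
    intro N
    induction N with
    | zero => simp
    | succ N ih =>
      intro s c hc i hi
      have hroot : ∀ i ∈ s, (c i).IsRoot r := by
        refine hv s (fun i => (c i).eval r) ?_
        funext j
        simpa [Finset.sum_apply, eval_finsetSum] using congrArg (eval r) (congrFun hc j)
      have hquot : ∑ i ∈ s, (c i /ₘ (X - C r)) • v i = 0 := by
        refine (smul_eq_zero.mp ?_).resolve_left (X_sub_C_ne_zero r)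
        rw [Finset.smul_sum]
        refine (Finset.sum_congr rfl fun i hi => ?_).trans hc
        rw [smul_smul, mul_divByMonic_eq_iff_isRoot.mpr (hroot i hi)]
      obtain ⟨q, hq⟩ := ih s _ hquot i hi
      refine ⟨q, ?_⟩
      rw [← mul_divByMonic_eq_iff_isRoot.mpr (hroot i hi), hq]
      ring
  intro s c hc i hi
  by_contra hci
  exact pow_rootMultiplicity_not_dvd hci r (pow_dvd _ s c hc i hi)

lemma linearIndependent_algebraMap_of_linearIndependent_eval (K : Type*) [Field K]
    [Algebra R[X] K] [IsFractionRing R[X] K] (r : R) {v : ι → m → R[X]}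
    (hv : LinearIndependent R fun i j => (v i j).eval r) :
    LinearIndependent K fun i j => algebraMap R[X] K (v i j) := by
  rw [← LinearIndependent.iff_fractionRing R[X] K]
  refine (linearIndependent_of_linearIndependent_eval r hv).map'
    ((Algebra.linearMap R[X] K).compLeft m) (LinearMap.ker_eq_bot.mpr fun p q hpq => ?_)
  exact funext fun j => IsFractionRing.injective R[X] K (congrFun hpq j)

end EvalTransfer

section PositionMatrix

variable {n : ℕ} {A : Type*} [DecidableEq A] (g : Fin n → List A)

noncomputable def positionMatrix : Matrix A (Fin n) RatX :=
  Matrix.of fun a j => algebraMap ℤ[X] RatX (positionPoly (g j) a)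

lemma SEvec_mem_ker_positionMatrix {E : List (Fin n) × List (Fin n)} (hE : IsSolutionE g E) :
    SEvec E (lengthType g) ∈ LinearMap.ker (positionMatrix g).mulVecLin := by
  rw [LinearMap.mem_ker, Matrix.mulVecLin_apply]
  funext a
  simp only [Matrix.mulVec, dotProduct, positionMatrix, SEvec, Matrix.of_apply, Pi.zero_apply]
  simp only [mul_comm (algebraMap ℤ[X] RatX (positionPoly _ a)), ← map_mul, ← map_sum,
    sum_evalAt_SE_mul_positionPoly g hE a, map_zero]

lemma morphRank_le_rank_positionMatrix [Finite A] : morphRank g ≤ (positionMatrix g).rank := by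
  obtain ⟨κ, sel, -, hspan, hli⟩ := exists_linearIndependent' ℚ (gamVec g)
  have : Finite κ := hli.finite
  have := Fintype.ofFinite κ
  have hcounts : LinearIndependent ℤ fun i j => (positionPoly (g j) (sel i)).eval 1 := by
    refine .of_comp ((Int.castAddHom ℚ).compLeft (Fin n)).toIntLinearMap ?_
    convert hli.restrict_scalars' ℤ using 1
    funext i j
    simp [gamVec, positionPoly_eval_one]
  have hrows : LinearIndependent RatX (positionMatrix g ∘ sel) :=
    linearIndependent_algebraMap_of_linearIndependent_eval RatX (1 : ℤ)
      (v := fun i j => positionPoly (g j) (sel i)) hcounts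
  calc morphRank g = Fintype.card κ := by
        rw [morphRank, GammaSpace, ← hspan, finrank_span_eq_card hli]
    _ = Module.finrank RatX (Submodule.span RatX (Set.range (positionMatrix g ∘ sel))) :=
        (finrank_span_eq_card hrows).symm
    _ ≤ (positionMatrix g).rank := by
        rw [Matrix.rank_eq_finrank_span_row]
        exact Submodule.finrank_mono (Submodule.span_mono (Set.range_comp_subset_range _ _))

lemma finrank_ker_positionMatrix_le [Finite A] :
    Module.finrank RatX (LinearMap.ker (positionMatrix g).mulVecLin) ≤ n - morphRank g := by
  have rank_nullity := (positionMatrix g).mulVecLin.finrank_range_add_finrank_ker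
  rw [Module.finrank_fin_fun] at rank_nullity
  have := morphRank_le_rank_positionMatrix g
  rw [Matrix.rank] at this
  omega

end PositionMatrix

lemma IsSolutionE.flatMap {Ξ A B : Type*} {h : Ξ → List A} {E : List Ξ × List Ξ}
    (hE : IsSolutionE h E) (θ : A → List B) : IsSolutionE (fun x => (h x).flatMap θ) E := by
  simp only [IsSolutionE, ← List.flatMap_assoc]
  rw [hE]

section PowMorph

variable {A : Type*} [DecidableEq A] (α : A → ℕ)

/-- The morphism `θ_α : a ↦ a^{α a}`. -/
def powMorph (b : A) : List A := List.replicate (α b) b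

lemma count_flatMap_powMorph (l : List A) (a : A) :
    (l.flatMap (powMorph α)).count a = α a * l.count a := by
  induction l with
  | nil => simp
  | cons b l ih =>
    rw [List.flatMap_cons, List.count_append, ih, List.count_cons, powMorph, List.count_replicate]
    rcases eq_or_ne b a with rfl | hba
    · simp [mul_add, add_comm]
    · simp [hba]

lemma length_flatMap_powMorph [Fintype A] (l : List A) :
    (l.flatMap (powMorph α)).length = ∑ a, α a * l.count a := by
  induction l with
  | nil => simp
  | cons b l ih =>
    simp only [List.flatMap_cons, List.length_append, ih, powMorph, List.length_replicate,
      List.count_cons, beq_iff_eq, mul_add, mul_ite, mul_one, mul_zero, Finset.sum_add_distrib,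
      Finset.sum_ite_eq, Finset.mem_univ, if_true, add_comm]

lemma gamVec_flatMap_powMorph {n : ℕ} (h : Fin n → List A) (a : A) :
    gamVec (fun j => (h j).flatMap (powMorph α)) a = (α a : ℚ) • gamVec h a := by
  funext j
  simp [gamVec, count_flatMap_powMorph]

lemma morphRank_flatMap_powMorph {n : ℕ} (hα : ∀ a, α a ≠ 0) (h : Fin n → List A) :
    morphRank (fun j => (h j).flatMap (powMorph α)) = morphRank h := by
  have hα' (a : A) : (α a : ℚ) ≠ 0 := Nat.cast_ne_zero.mpr (hα a)
  suffices Submodule.span ℚ (Set.range fun a => (α a : ℚ) • gamVec h a) = GammaSpace h by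
    rw [morphRank, morphRank, GammaSpace, funext (gamVec_flatMap_powMorph α h), this]
  refine le_antisymm (Submodule.span_le.mpr ?_) (Submodule.span_le.mpr ?_) <;>
    rintro _ ⟨a, rfl⟩
  · exact Submodule.smul_mem _ _ (Submodule.subset_span ⟨a, rfl⟩)
  · rw [← inv_smul_smul₀ (hα' a) (gamVec h a)]
    exact Submodule.smul_mem _ _ (Submodule.subset_span ⟨a, rfl⟩)

end PowMorph

lemma not_linearIndependent_pair_of_finrank_le_one {K V : Type*} [Field K] [AddCommGroup V]
    [Module K V] {W : Submodule K V} [FiniteDimensional K W] (hW : Module.finrank K W ≤ 1)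
    {u v : V} (hu : u ∈ W) (hv : v ∈ W) : ¬ LinearIndependent K ![u, v] := by
  intro hli
  have hspan : Submodule.span K (Set.range ![u, v]) ≤ W := by
    rw [Submodule.span_le, Set.range_subset_iff, Fin.forall_fin_two]
    exact ⟨hu, hv⟩
  have := Submodule.finrank_mono hspan
  rw [finrank_span_eq_card hli, Fintype.card_fin] at this
  omega

/-- if `h` is a solution of rank `n-1` of `E` and `E'` and `α ∈ ℕ^k`
is positive, then `𝒮_E(L(θ_α∘h))` and `𝒮_{E'}(L(θ_α∘h))` are linearly dependent
over `ℚ(x)`. -/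
theorem SEvec_linearDependent {n k : ℕ} (h : Fin n → List (Fin k))
    (E E' : List (Fin n) × List (Fin n))
    (hE : IsSolutionE h E) (hE' : IsSolutionE h E')
    (hrank : morphRank h = n - 1)
    (α : Fin k → ℕ) (hα : ∀ a, 0 < α a) :
    ¬ LinearIndependent RatX ![SEvec E (powLenType α h), SEvec E' (powLenType α h)] := by
  set g := fun j => (h j).flatMap (powMorph α)
  have hlen : powLenType α h = lengthType g :=
    funext fun j => (length_flatMap_powMorph α (h j)).symm
  have hker := finrank_ker_positionMatrix_le g
  rw [morphRank_flatMap_powMorph α (fun a => (hα a).ne') h, hrank] at hker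
  rw [hlen]
  exact not_linearIndependent_pair_of_finrank_le_one (by omega)
    (SEvec_mem_ker_positionMatrix g (hE.flatMap _)) (SEvec_mem_ker_positionMatrix g (hE'.flatMap _))

end WordEquations
end

section
/- Let λ ∈ ℤⁿ ∖ {0} have coprime coefficients and let N ⊆ 𝒩(λ) ∩ ℕ₀ⁿ be a set of rank n−1. Then a polynomial p ∈ ℤ[X₁,…,Xₙ] satisfies p(γ) = 0 for all γ ∈ N if and only if X^{λ⁺} − X^{λ⁻} divides p. -/
open scoped BigOperators

namespace WordEquations

/-!
Evaluation at `γ ∈ N` sends `X^{λ⁺}` and `X^{λ⁻}` to the same power of `x`, which gives one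
direction. Conversely, if `α - β ∈ ℤλ` then `X^{λ⁺} - X^{λ⁻}` divides `X^α - X^β`. Since `N`
spans `λ^⊥` and is not covered by finitely many hyperplanes of it, some `γ ∈ N` separates every
pair of exponents of `p` whose difference is not in `ℚλ = ℤλ` (coprimality). If `p(γ) = 0`, the
coefficient of `x^{γ·α}` must cancel, so some other exponent `β` of `p` has `α - β ∈ ℤλ`;
subtracting `c (X^α - X^β)` shrinks the support of `p`, and induction on its size finishes.
-/

open MvPolynomial Module LinearMap

variable {n : ℕ}

lemma Xpow_eq_monomial (α : Fin n →₀ ℕ) : Xpow α = monomial α 1 := by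
  rw [Xpow, ← prod_X_pow_eq_monomial]
  exact (Finset.prod_subset (Finset.subset_univ _) fun i _ hi => by
    simp [Finsupp.notMem_support_iff.mp hi]).symm

lemma Xpow_add (a b : Fin n → ℕ) : Xpow (a + b) = Xpow a * Xpow b := by
  simp [Xpow, pow_add, Finset.prod_mul_distrib]

lemma Xpow_nsmul (k : ℕ) (a : Fin n → ℕ) : Xpow (k • a) = Xpow a ^ k := by
  simp [Xpow, pow_mul', Finset.prod_pow]

lemma evalAt_apply (γ : Fin n → ℕ) (p : MvPolynomial (Fin n) ℤ) :
    evalAt γ p = eval₂Hom (Int.castRingHom (Polynomial ℤ)) (fun i => Polynomial.X ^ γ i) p :=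
  rfl

lemma evalAt_monomial (γ : Fin n → ℕ) (α : Fin n →₀ ℕ) (c : ℤ) :
    evalAt γ (monomial α c) = Polynomial.C c * Polynomial.X ^ (γ ⬝ᵥ α) := by
  rw [evalAt, eval₂_monomial, Finsupp.prod_fintype _ _ (by simp)]
  simp [← pow_mul, Finset.prod_pow_eq_pow_sum, dotProduct]

lemma evalAt_Xpow (γ a : Fin n → ℕ) : evalAt γ (Xpow a) = Polynomial.X ^ (γ ⬝ᵥ a) := by
  simpa [← Xpow_eq_monomial] using evalAt_monomial γ (Finsupp.equivFunOnFinite.symm a) 1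

lemma coeff_evalAt (γ : Fin n → ℕ) (p : MvPolynomial (Fin n) ℤ) (e : ℕ) :
    (evalAt γ p).coeff e =
      ∑ α ∈ p.support.filter (fun α : Fin n →₀ ℕ => γ ⬝ᵥ ⇑α = e), p.coeff α := by
  conv_lhs => rw [p.as_sum, evalAt_apply, map_sum]
  simp [← evalAt_apply, evalAt_monomial, Finset.sum_filter, eq_comm]

lemma exists_ne_mem_support_of_evalAt_eq_zero {γ : Fin n → ℕ} {p : MvPolynomial (Fin n) ℤ}
    (hp : evalAt γ p = 0) {α : Fin n →₀ ℕ} (hα : α ∈ p.support) :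
    ∃ β ∈ p.support, β ≠ α ∧ γ ⬝ᵥ ⇑β = γ ⬝ᵥ ⇑α := by
  by_contra! h
  have hsum := coeff_evalAt γ p (γ ⬝ᵥ ⇑α)
  rw [hp, Polynomial.coeff_zero, Finset.sum_eq_single_of_mem α (by simp [hα])] at hsum
  · exact mem_support_iff.mp hα hsum.symm
  · intro β hβ hne
    simp only [Finset.mem_filter] at hβ
    exact absurd hβ.2 (h β hβ.1 hne)

lemma lamPos_sub_lamNeg (lam : Fin n → ℤ) (i : Fin n) :
    (lamPos lam i : ℤ) - lamNeg lam i = lam i := by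
  simp only [lamPos, lamNeg]; omega

lemma lamPos_eq_zero_or_lamNeg_eq_zero (lam : Fin n → ℤ) (i : Fin n) :
    lamPos lam i = 0 ∨ lamNeg lam i = 0 := by
  simp only [lamPos, lamNeg]; omega

lemma dvd_Xpow_sub_Xpow_of_nat (lam : Fin n → ℤ) (k : ℕ) {α β : Fin n → ℕ}
    (h : ∀ i, (α i : ℤ) - β i = k * lam i) :
    Xpow (lamPos lam) - Xpow (lamNeg lam) ∣ Xpow α - Xpow β := by
  -- `α ⊓ β = α - kλ⁺ = β - kλ⁻`, since `λ⁺` and `λ⁻` have disjoint supports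
  have hcoord : ∀ i, α i = min (α i) (β i) + k * lamPos lam i ∧
      β i = min (α i) (β i) + k * lamNeg lam i := fun i => by
    have hi := h i
    rw [← lamPos_sub_lamNeg lam i] at hi
    rcases lamPos_eq_zero_or_lamNeg_eq_zero lam i with h0 | h0 <;>
      simp only [h0, Nat.cast_zero, sub_zero, zero_sub, mul_neg, mul_zero, add_zero,
        ← Nat.cast_mul] at hi ⊢ <;> omega
  obtain ⟨δ, rfl, rfl⟩ : ∃ δ, α = δ + k • lamPos lam ∧ β = δ + k • lamNeg lam :=
    ⟨α ⊓ β, funext fun i => (hcoord i).1, funext fun i => (hcoord i).2⟩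
  rw [Xpow_add, Xpow_add, Xpow_nsmul, Xpow_nsmul, ← mul_sub]
  exact dvd_mul_of_dvd_right (sub_dvd_pow_sub_pow _ _ k) _

lemma dvd_Xpow_sub_Xpow (lam : Fin n → ℤ) (k : ℤ) {α β : Fin n → ℕ}
    (h : ∀ i, (α i : ℤ) - β i = k * lam i) :
    Xpow (lamPos lam) - Xpow (lamNeg lam) ∣ Xpow α - Xpow β := by
  obtain ⟨k, rfl | rfl⟩ := Int.eq_nat_or_neg k
  · exact dvd_Xpow_sub_Xpow_of_nat lam k h
  · rw [← dvd_sub_comm]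
    exact dvd_Xpow_sub_Xpow_of_nat lam k fun i => by linarith [h i]

lemma evalAt_Xpow_lamPos {lam : Fin n → ℤ} {γ : Fin n → ℕ} (hγ : ∑ i, lam i * (γ i : ℤ) = 0) :
    evalAt γ (Xpow (lamPos lam)) = evalAt γ (Xpow (lamNeg lam)) := by
  rw [evalAt_Xpow, evalAt_Xpow]
  congr 1
  zify
  rw [← sub_eq_zero, ← hγ]
  simp only [dotProduct, Nat.cast_sum, Nat.cast_mul, ← Finset.sum_sub_distrib]
  exact Finset.sum_congr rfl fun i _ => by rw [← mul_sub, lamPos_sub_lamNeg, mul_comm]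

lemma evalAt_eq_zero_of_dvd {lam : Fin n → ℤ} {γ : Fin n → ℕ} (hγ : ∑ i, lam i * (γ i : ℤ) = 0)
    {p : MvPolynomial (Fin n) ℤ} (hp : Xpow (lamPos lam) - Xpow (lamNeg lam) ∣ p) :
    evalAt γ p = 0 := by
  obtain ⟨q, rfl⟩ := hp
  rw [evalAt_apply, map_mul, map_sub, ← evalAt_apply, ← evalAt_apply, evalAt_Xpow_lamPos hγ,
    sub_self, zero_mul]

lemma finrank_inf_ker_add_one {K V : Type*} [Field K] [AddCommGroup V] [Module K V]
    (S : Submodule K V) [FiniteDimensional K S] {f : Dual K V} (hf : ¬ S ≤ ker f) :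
    finrank K ↥(S ⊓ ker f) + 1 = finrank K S := by
  have hres : f.domRestrict S ≠ 0 := fun h0 =>
    hf fun v hv => by simpa using LinearMap.congr_fun h0 ⟨v, hv⟩
  rw [← Submodule.map_comap_subtype, ← ker_domRestrict, Submodule.finrank_map_subtype_eq]
  exact Dual.finrank_ker_add_one_of_ne_zero hres

lemma HasRank.exists_mem_forall_apply_ne_zero {n r : ℕ} {M : Set (Fin n → ℚ)} (hM : HasRank M r)
    (F : Finset (Dual ℚ (Fin n → ℚ))) (hF : ∀ f ∈ F, ¬ Submodule.span ℚ M ≤ ker f) :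
    ∃ m ∈ M, ∀ f ∈ F, f m ≠ 0 := by
  classical
  by_contra! hcover
  refine hM.2 (F.image fun f => Submodule.span ℚ M ⊓ ker f) ?_ fun m hm => ?_
  · simp only [Finset.mem_image]
    rintro _ ⟨f, hf, rfl⟩
    exact ⟨inf_le_left, hM.1 ▸ finrank_inf_ker_add_one _ (hF f hf)⟩
  · obtain ⟨f, hf, hfm⟩ := hcover m hm
    simp only [Set.mem_iUnion, Finset.mem_image]
    exact ⟨_, ⟨f, hf, rfl⟩, Submodule.subset_span hm, hfm⟩

lemma exists_eq_smul_of_ker_le {K ι : Type*} [Field K] [Fintype ι] [DecidableEq ι] {v w : ι → K}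
    (h : ker (dotProductEquiv K ι v) ≤ ker (dotProductEquiv K ι w)) : ∃ c : K, w = c • v := by
  have hspan := mem_span_of_iInf_ker_le_ker (L := fun _ : Unit => dotProductEquiv K ι v)
    (by simpa using h)
  obtain ⟨c, hc⟩ := Submodule.mem_span_singleton.mp (by simpa using hspan)
  exact ⟨c, (dotProductEquiv K ι).injective (by simpa using hc.symm)⟩

lemma exists_int_eq_mul_of_cast_eq_mul {ι : Type*} [Fintype ι] {lam d : ι → ℤ}
    (hcop : Finset.univ.gcd lam = 1) {c : ℚ} (h : ∀ i, (d i : ℚ) = c * lam i) :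
    ∃ k : ℤ, ∀ i, d i = k * lam i := by
  obtain ⟨u, hu⟩ := Finset.univ.gcd_eq_sum_mul lam
  have hc : ((∑ i, d i * u i : ℤ) : ℚ) = c := by
    have : (1 : ℚ) = ∑ i, (lam i : ℚ) * u i := by exact_mod_cast hcop ▸ hu
    push_cast
    simp only [h, mul_assoc, ← Finset.mul_sum, ← this, mul_one]
  exact ⟨_, fun i => by exact_mod_cast hc ▸ h i⟩

lemma card_support_sub_monomial_sub_monomial_lt {σ R : Type*} [CommRing R]
    {p : MvPolynomial σ R} {α β : σ →₀ ℕ} (hα : α ∈ p.support) (hβ : β ∈ p.support)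
    (hne : α ≠ β) :
    (p - (monomial α (p.coeff α) - monomial β (p.coeff α))).support.card < p.support.card := by
  classical
  refine Finset.card_lt_card ((Finset.ssubset_iff_of_subset fun δ hδ => ?_).mpr
    ⟨α, hα, by simp [coeff_monomial, hne.symm]⟩)
  by_contra hδp
  have hαδ : α ≠ δ := fun h => hδp (h ▸ hα)
  have hβδ : β ≠ δ := fun h => hδp (h ▸ hβ)
  simp_all [coeff_monomial]

section Separation

variable {lam : Fin n → ℤ} {N : Set (Fin n → ℕ)}

lemma span_eq_ker_dotProduct (hne : lam ≠ 0) (hN : ∀ γ ∈ N, ∑ i, lam i * (γ i : ℤ) = 0)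
    (hrank : HasRank ((fun γ : Fin n → ℕ => fun i => ((γ i : ℕ) : ℚ)) '' N) (n - 1)) :
    Submodule.span ℚ ((fun γ : Fin n → ℕ => fun i => ((γ i : ℕ) : ℚ)) '' N) =
      ker (dotProductEquiv ℚ (Fin n) fun i => (lam i : ℚ)) := by
  have hf : dotProductEquiv ℚ (Fin n) (fun i => (lam i : ℚ)) ≠ 0 := by
    rw [LinearEquiv.map_ne_zero_iff]
    exact fun h => hne (funext fun i => by simpa using congr_fun h i)
  refine Submodule.eq_of_le_of_finrank_eq ?_ ?_
  · rw [Submodule.span_le]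
    rintro _ ⟨γ, hγ, rfl⟩
    simpa [dotProduct] using congrArg (Int.cast : ℤ → ℚ) (hN γ hγ)
  · have := Dual.finrank_ker_add_one_of_ne_zero hf
    rw [hrank.1]
    simp only [finrank_fin_fun] at this
    omega

lemma exists_separating_point (hne : lam ≠ 0) (hcop : Finset.univ.gcd lam = 1)
    (hN : ∀ γ ∈ N, ∑ i, lam i * (γ i : ℤ) = 0)
    (hrank : HasRank ((fun γ : Fin n → ℕ => fun i => ((γ i : ℕ) : ℚ)) '' N) (n - 1))
    (S : Finset (Fin n →₀ ℕ)) :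
    ∃ γ ∈ N, ∀ α ∈ S, ∀ β ∈ S, γ ⬝ᵥ ⇑α = γ ⬝ᵥ ⇑β →
      ∃ k : ℤ, ∀ i, (α i : ℤ) - β i = k * lam i := by
  classical
  let diff : (Fin n →₀ ℕ) × (Fin n →₀ ℕ) → Fin n → ℤ := fun q i => q.1 i - q.2 i
  let bad := (S ×ˢ S).filter fun q => ¬ ∃ k : ℤ, ∀ i, diff q i = k * lam i
  obtain ⟨_, ⟨γ, hγ, rfl⟩, hsep⟩ := hrank.exists_mem_forall_apply_ne_zero
    (bad.image fun q => dotProductEquiv ℚ (Fin n) fun i => (diff q i : ℚ)) (by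
      simp only [Finset.mem_image]
      rintro _ ⟨q, hq, rfl⟩ hle
      rw [span_eq_ker_dotProduct hne hN hrank] at hle
      obtain ⟨c, hc⟩ := exists_eq_smul_of_ker_le hle
      exact (Finset.mem_filter.mp hq).2
        (exists_int_eq_mul_of_cast_eq_mul hcop fun i => congr_fun hc i))
  refine ⟨γ, hγ, fun α hα β hβ hdot => ?_⟩
  by_contra hbad
  have hαβ : (α, β) ∈ bad := Finset.mem_filter.mpr ⟨Finset.mem_product.mpr ⟨hα, hβ⟩, hbad⟩
  refine hsep _ (Finset.mem_image_of_mem _ hαβ) ?_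
  have : ((γ ⬝ᵥ ⇑α : ℕ) : ℚ) = ((γ ⬝ᵥ ⇑β : ℕ) : ℚ) := congrArg _ hdot
  simp only [dotProduct, Nat.cast_sum, Nat.cast_mul] at this
  simp only [dotProductEquiv_apply_apply, dotProduct, diff, Int.cast_sub, Int.cast_natCast]
  simp only [mul_comm _ ((γ _ : ℕ) : ℚ), mul_sub, Finset.sum_sub_distrib, this, sub_self]

lemma dvd_of_forall_evalAt_eq_zero (hne : lam ≠ 0) (hcop : Finset.univ.gcd lam = 1)
    (hN : ∀ γ ∈ N, ∑ i, lam i * (γ i : ℤ) = 0)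
    (hrank : HasRank ((fun γ : Fin n → ℕ => fun i => ((γ i : ℕ) : ℚ)) '' N) (n - 1))
    (p : MvPolynomial (Fin n) ℤ) (hp : ∀ γ ∈ N, evalAt γ p = 0) :
    Xpow (lamPos lam) - Xpow (lamNeg lam) ∣ p := by
  induction hcard : p.support.card using Nat.strong_induction_on generalizing p with
  | _ m ih =>
    obtain hp0 | ⟨α, hα⟩ := p.support.eq_empty_or_nonempty
    · simp [support_eq_empty.mp hp0]
    obtain ⟨γ, hγ, hsep⟩ := exists_separating_point hne hcop hN hrank p.support
    obtain ⟨β, hβ, hβα, hdot⟩ := exists_ne_mem_support_of_evalAt_eq_zero (hp γ hγ) hα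
    obtain ⟨k, hk⟩ := hsep α hα β hβ hdot.symm
    set b := monomial α (p.coeff α) - monomial β (p.coeff α)
    have hb : Xpow (lamPos lam) - Xpow (lamNeg lam) ∣ b := by
      have : b = C (p.coeff α) * (Xpow α - Xpow β) := by
        rw [mul_sub, Xpow_eq_monomial, Xpow_eq_monomial, C_mul_monomial, C_mul_monomial, mul_one]
      rw [this]
      exact dvd_mul_of_dvd_right (dvd_Xpow_sub_Xpow lam k hk) _
    have hpb : Xpow (lamPos lam) - Xpow (lamNeg lam) ∣ p - b := by
      refine ih _ (hcard ▸ card_support_sub_monomial_sub_monomial_lt hα hβ hβα.symm) _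
        (fun γ hγ => ?_) rfl
      rw [evalAt_apply, map_sub, ← evalAt_apply, ← evalAt_apply, hp γ hγ,
        evalAt_eq_zero_of_dvd (hN γ hγ) hb, sub_zero]
    simpa using dvd_add hpb hb

end Separation

/-- for `λ ≠ 0` with coprime coefficients and `N ⊆ 𝒩(λ) ∩ ℕ₀ⁿ` of rank
`n-1`, a polynomial `p` vanishes on `N` iff `X^{λ⁺} - X^{λ⁻}` divides `p`. -/
theorem vanishes_iff_dvd {n : ℕ} (lam : Fin n → ℤ) (hne : lam ≠ 0)
    (hcop : Finset.univ.gcd lam = 1)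
    (N : Set (Fin n → ℕ))
    (hN : ∀ γ ∈ N, ∑ i, lam i * (γ i : ℤ) = 0)
    (hrank : HasRank ((fun γ : Fin n → ℕ => fun i => ((γ i : ℕ) : ℚ)) '' N) (n - 1))
    (p : MvPolynomial (Fin n) ℤ) :
    (∀ γ ∈ N, evalAt γ p = 0) ↔ (Xpow (lamPos lam) - Xpow (lamNeg lam)) ∣ p :=
  ⟨dvd_of_forall_evalAt_eq_zero hne hcop hN hrank p,
    fun hdvd γ hγ => evalAt_eq_zero_of_dvd (hN γ hγ) hdvd⟩

end WordEquations
end
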